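/- Let k be a field of characteristic 2, and consider the six elements x₁², x₁z, x₂², x₂z, x₁x₂z, z of k[x₁, x₂, z]. Let M be the 6×3 matrix over k[x₁, x₂, z] whose rows are the gradients (∂/∂x₁, ∂/∂x₂, ∂/∂z) of these six elements. Then the ideal of k[x₁, x₂, z] generated by all 3×3 minors of M is the principal ideal (z²). -/
import Mathlib


open MvPolynomial

/-- The six elements `x₁², x₁z, x₂², x₂z, x₁x₂z, z` of `k[x₁, x₂, z]`
(variables encoded as `x₁ = X 0`, `x₂ = X 1`, `z = X 2`). -/
noncomputable def fvec (k : Type*) [Field k] : Fin 6 → MvPolynomial (Fin 3) k :=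
  ![(X 0) ^ 2, X 0 * X 2, (X 1) ^ 2, X 1 * X 2, X 0 * X 1 * X 2, X 2]

/-- The `6 × 3` Jacobian matrix whose rows are the gradients
`(∂/∂x₁, ∂/∂x₂, ∂/∂z)` of the six elements above. -/
noncomputable def jacMat (k : Type*) [Field k] :
    Matrix (Fin 6) (Fin 3) (MvPolynomial (Fin 3) k) :=
  Matrix.of fun i j => MvPolynomial.pderiv j (fvec k i)

noncomputable def Lmat (k : Type*) [Field k] :
    Matrix (Fin 6) (Fin 3) (MvPolynomial (Fin 3) k) :=
  Matrix.of ![![0,0,0], ![1,0,0], ![0,0,0], ![0,1,0], ![X 1, X 0, X 0 * X 1], ![0,0,1]]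

noncomputable def Nmat (k : Type*) [Field k] :
    Matrix (Fin 3) (Fin 3) (MvPolynomial (Fin 3) k) :=
  Matrix.of ![![X 2, 0, X 0], ![0, X 2, X 1], ![0, 0, 1]]

lemma cons_val_five' {α : Type*} (x : α) (u : Fin 5 → α) :
    Matrix.vecCons x u 5 = u 4 := rfl

lemma jac_factor (k : Type*) [Field k] [CharP k 2] : jacMat k = Lmat k * Nmat k := by
  have h2 : (2 : MvPolynomial (Fin 3) k) = 0 := by
    haveI := MvPolynomial.instCharP (σ := Fin 3) (R := k) (p := 2)
    exact CharTwo.two_eq_zero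
  apply Matrix.ext
  intro i j
  fin_cases i <;> fin_cases j <;>
    simp [jacMat, fvec, Lmat, Nmat, Matrix.mul_apply, Fin.sum_univ_three, pderiv_X,
      Pi.single_apply, Matrix.vecHead, Matrix.vecTail, cons_val_five', Matrix.cons_val_four,
      h2] <;>
    first
    | ring1
    | linear_combination (X 0 * X 1 : MvPolynomial (Fin 3) k) * h2

lemma detN (k : Type*) [Field k] : (Nmat k).det = (X 2 : MvPolynomial (Fin 3) k) ^ 2 := by
  simp [Nmat, Matrix.det_fin_three, Matrix.vecHead, Matrix.vecTail]
  ring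

lemma det135 (k : Type*) [Field k] :
    ((jacMat k).submatrix (⟨![1,3,5], by decide⟩ : Fin 3 ↪ Fin 6) id).det
      = (X 2 : MvPolynomial (Fin 3) k) ^ 2 := by
  simp [jacMat, fvec, Matrix.det_fin_three, Matrix.submatrix, Matrix.vecHead, Matrix.vecTail,
    cons_val_five', Matrix.cons_val_four, pderiv_X, Pi.single_apply]
  ring

/-- In characteristic `2`, the ideal of `k[x₁, x₂, z]` generated by all `3 × 3`
minors of the Jacobian matrix of `(x₁², x₁z, x₂², x₂z, x₁x₂z, z)` is the
principal ideal `(z²)`. -/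
theorem minors_jacobian_eq_zsq {k : Type*} [Field k] [CharP k 2] :
    Ideal.span { d : MvPolynomial (Fin 3) k |
        ∃ g : Fin 3 ↪ Fin 6, d = ((jacMat k).submatrix g id).det } =
      Ideal.span ({(X 2) ^ 2} : Set (MvPolynomial (Fin 3) k)) := by
  apply le_antisymm
  · rw [Ideal.span_le]
    rintro d ⟨g, rfl⟩
    rw [jac_factor]
    have h : (Lmat k * Nmat k).submatrix g id
        = (Lmat k).submatrix g id * (Nmat k).submatrix id id := by
      rw [← Matrix.submatrix_mul_equiv (Lmat k) (Nmat k) g (Equiv.refl (Fin 3)) id]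
      rfl
    rw [h, Matrix.submatrix_id_id, Matrix.det_mul, detN]
    simp only [SetLike.mem_coe, Ideal.mem_span_singleton]
    exact Dvd.intro _ (mul_comm _ _)
  · rw [Ideal.span_le, Set.singleton_subset_iff]
    exact Ideal.subset_span ⟨⟨![1,3,5], by decide⟩, (det135 k).symm⟩
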